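/- arXiv:2604.05234 — 2 statements merged into one kernel-verified Lean document; each statement's English description precedes it below -/
import Mathlib

section
/- Let D be an N×N real symmetric positive semidefinite matrix and let Q = (I + D)⁻¹. Then for all indices i ≠ j, the off-diagonal entries satisfy |Q_{ij}| ≤ √(D_{ii} · D_{jj}). -/
/-!
Put `P = 1 - (1 + D)⁻¹ = D (1 + D)⁻¹`, i.e. `f(D)` for `f(x) = x / (1 + x)`. Since
`0 ≤ f(x) ≤ x` for `x ≥ 0`, we get `0 ≤ P ≤ D` in the Loewner order; concretely `P` and `D - P`
are the congruences of `D + D²` and `D (1 + D) D` by the symmetric matrix `(1 + D)⁻¹`.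
Off the diagonal `(1 + D)⁻¹` agrees with `-P`, and the `2 × 2` principal minors of the PSD
matrix `P` give `P i j ^ 2 ≤ P i i * P j j ≤ D i i * D j j`.
-/

open Matrix

namespace Matrix

theorem PosSemidef.sq_apply_le_mul {n : Type*} {P : Matrix n n ℝ} (hP : P.PosSemidef) (i j : n) :
    P i j ^ 2 ≤ P i i * P j j := by
  have hdet := (hP.submatrix ![i, j]).det_nonneg
  rw [det_fin_two] at hdet
  simp only [submatrix_apply, cons_val_zero, cons_val_one] at hdet
  have hsymm : P j i = P i j := by simpa using hP.isHermitian.apply i j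
  rw [hsymm] at hdet
  linarith

theorem PosSemidef.abs_apply_le_sqrt {n : Type*} {P : Matrix n n ℝ} (hP : P.PosSemidef)
    (i j : n) : |P i j| ≤ √(P i i * P j j) :=
  Real.abs_le_sqrt (hP.sq_apply_le_mul i j)

theorem one_sub_inv_one_add_eq_mul_inv {n R : Type*} [Fintype n] [DecidableEq n] [CommRing R]
    {D : Matrix n n R} (h : IsUnit (1 + D).det) :
    1 - (1 + D)⁻¹ = D * (1 + D)⁻¹ := by
  calc 1 - (1 + D)⁻¹ = (1 + D) * (1 + D)⁻¹ - (1 + D)⁻¹ := by rw [mul_nonsing_inv _ h]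
    _ = D * (1 + D)⁻¹ := by noncomm_ring

namespace PosSemidef

open scoped ComplexOrder

variable {n 𝕜 : Type*} [Fintype n] [DecidableEq n] [RCLike 𝕜] {D : Matrix n n 𝕜}

theorem isUnit_det_one_add (hD : D.PosSemidef) : IsUnit (1 + D).det :=
  (isUnit_iff_isUnit_det _).mp (PosDef.one.add_posSemidef hD).isUnit

theorem one_sub_inv_one_add (hD : D.PosSemidef) : (1 - (1 + D)⁻¹).PosSemidef := by
  set Q := (1 + D)⁻¹
  have hQh : Qᴴ = Q := (PosSemidef.one.add hD).isHermitian.inv.eq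
  have hQ : Q * (1 + D) = 1 := nonsing_inv_mul _ hD.isUnit_det_one_add
  have key : 1 - Q = Qᴴ * (D + Dᴴ * D) * Q := by
    rw [one_sub_inv_one_add_eq_mul_inv hD.isUnit_det_one_add, hQh, hD.isHermitian.eq]
    calc D * Q = Q * (1 + D) * (D * Q) := by rw [hQ, one_mul]
      _ = Q * (D + D * D) * Q := by noncomm_ring
  rw [key]
  exact (hD.add (posSemidef_conjTranspose_mul_self D)).conjTranspose_mul_mul_same Q

theorem sub_one_sub_inv_one_add (hD : D.PosSemidef) : (D - (1 - (1 + D)⁻¹)).PosSemidef := by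
  set Q := (1 + D)⁻¹
  have hQh : Qᴴ = Q := (PosSemidef.one.add hD).isHermitian.inv.eq
  have hQ : Q * (1 + D) = 1 := nonsing_inv_mul _ hD.isUnit_det_one_add
  have key : D - (1 - Q) = Qᴴ * (Dᴴ * (1 + D) * D) * Q := by
    rw [one_sub_inv_one_add_eq_mul_inv hD.isUnit_det_one_add, hQh, hD.isHermitian.eq]
    calc D - D * Q = D * (1 - Q) := by noncomm_ring
      _ = Q * (1 + D) * (D * (D * Q)) := by
        rw [one_sub_inv_one_add_eq_mul_inv hD.isUnit_det_one_add, hQ, one_mul]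
      _ = Q * (D * (1 + D) * D) * Q := by noncomm_ring
  rw [key]
  exact ((PosSemidef.one.add hD).conjTranspose_mul_mul_same D).conjTranspose_mul_mul_same Q

end PosSemidef

end Matrix

/-- For a symmetric PSD matrix `D` and `Q = (I + D)⁻¹`, the off-diagonal entries satisfy
`|Q i j| ≤ √(D i i * D j j)`. -/
theorem stmt2 {N : ℕ} (D : Matrix (Fin N) (Fin N) ℝ) (hD : D.PosSemidef)
    (i j : Fin N) (hij : i ≠ j) :
    |((1 + D)⁻¹) i j| ≤ Real.sqrt (D i i * D j j) := by
  set P := 1 - (1 + D)⁻¹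
  have hP : P.PosSemidef := hD.one_sub_inv_one_add
  have hPD (k : Fin N) : P k k ≤ D k k :=
    sub_nonneg.mp (hD.sub_one_sub_inv_one_add.diag_nonneg (i := k))
  calc |((1 + D)⁻¹) i j| = |P i j| := by simp [P, one_apply_ne hij]
    _ ≤ √(P i i * P j j) := hP.abs_apply_le_sqrt i j
    _ ≤ √(D i i * D j j) :=
      Real.sqrt_le_sqrt (mul_le_mul (hPD i) (hPD j) hP.diag_nonneg hD.diag_nonneg)
end

section
/- Let D be an N×N real symmetric positive semidefinite matrix with D_{ii} ≤ c²/N for every i, and let x ∈ ℝᴺ with ‖x‖_∞ ≤ A. Then every entry of (I + D)⁻¹x is bounded in absolute value by A(1 + c²). -/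
/-!
Write `E = (I + D)⁻¹ D`, so that `(I + D)⁻¹ = I - E`. Both `E = (I + D)⁻¹ (D + D²) (I + D)⁻¹`
and `D - E = (I + D)⁻¹ (D² + D³) (I + D)⁻¹` are positive semidefinite, hence
`0 ≤ E k k ≤ D k k ≤ c² / N`, and positive semidefiniteness of `E` bounds every entry by the
diagonal: `|E i j| ≤ (E i i + E j j) / 2 ≤ c² / N`. So `|(E x) i| ≤ N · (c² / N) · A = A c²`.
-/

open Matrix

open scoped ComplexOrder

namespace Matrix

variable {m n : Type*} [Fintype n]

lemma PosSemidef.abs_apply_le_half_add_diag {E : Matrix n n ℝ} (hE : E.PosSemidef) (i j : n) :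
    |E i j| ≤ (E i i + E j j) / 2 := by
  classical
  have hsymm : E j i = E i j := by simpa using congrFun (congrFun hE.isHermitian i) j
  have hplus := hE.dotProduct_mulVec_nonneg (Pi.single i 1 + Pi.single j 1)
  have hminus := hE.dotProduct_mulVec_nonneg (Pi.single i 1 - Pi.single j 1)
  simp only [star_trivial, mulVec_add, mulVec_sub, mulVec_single, dotProduct_add,
    dotProduct_sub, add_dotProduct, sub_dotProduct, single_dotProduct, Pi.smul_apply,
    op_smul_eq_mul, col_apply, one_mul, mul_one] at hplus hminus
  rw [abs_le]
  constructor <;> linarith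

lemma PosSemidef.abs_apply_le_of_diag_le {E : Matrix n n ℝ} (hE : E.PosSemidef) {b : ℝ}
    (hb : ∀ k, E k k ≤ b) (i j : n) : |E i j| ≤ b := by
  linarith [hE.abs_apply_le_half_add_diag i j, hb i, hb j]

lemma abs_mulVec_apply_le {E : Matrix m n ℝ} {x : n → ℝ} {b A : ℝ} {i : m}
    (hE : ∀ j, |E i j| ≤ b) (hx : ∀ j, |x j| ≤ A) :
    |(E *ᵥ x) i| ≤ Fintype.card n * b * A :=
  calc |(E *ᵥ x) i| ≤ ∑ j, |E i j| * |x j| := by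
        simpa only [mulVec, dotProduct, abs_mul] using
          Finset.abs_sum_le_sum_abs (fun j ↦ E i j * x j) Finset.univ
    _ ≤ ∑ _j : n, b * A := Finset.sum_le_sum fun j _ ↦
        mul_le_mul (hE j) (hx j) (abs_nonneg _) ((abs_nonneg _).trans (hE j))
    _ = Fintype.card n * b * A := by simp [mul_assoc]

variable [DecidableEq n] {𝕜 : Type*} [RCLike 𝕜] {D : Matrix n n 𝕜}

lemma inv_one_add_eq_one_sub_inv_one_add_mul (h : IsUnit (1 + D).det) :
    (1 + D)⁻¹ = 1 - (1 + D)⁻¹ * D := by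
  rw [eq_sub_iff_add_eq]
  nth_rewrite 1 [← Matrix.mul_one (1 + D)⁻¹]
  rw [← Matrix.mul_add, nonsing_inv_mul _ h]

lemma PosSemidef.inv_one_add_mul (hD : D.PosSemidef) : ((1 + D)⁻¹ * D).PosSemidef := by
  have hM := PosDef.one.add_posSemidef hD
  have h : (1 + D)⁻¹ * D = (1 + D)⁻¹ * (D + D ^ 2) * (1 + D)⁻¹ := by
    rw [show D + D ^ 2 = D * (1 + D) by noncomm_ring, ← Matrix.mul_assoc,
      mul_nonsing_inv_cancel_right _ _ hM.det_pos.ne'.isUnit]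
  rw [h]
  have := (hD.add (hD.pow 2)).mul_mul_conjTranspose_same (1 + D)⁻¹
  rwa [hM.isHermitian.inv.eq] at this

lemma PosSemidef.sub_inv_one_add_mul (hD : D.PosSemidef) : (D - (1 + D)⁻¹ * D).PosSemidef := by
  have hM := PosDef.one.add_posSemidef hD
  have h : D - (1 + D)⁻¹ * D = (1 + D)⁻¹ * (D ^ 2 + D ^ 3) * (1 + D)⁻¹ :=
    calc D - (1 + D)⁻¹ * D = (1 + D)⁻¹ * D ^ 2 := by
          rw [show D ^ 2 = (1 + D) * D - D by noncomm_ring, Matrix.mul_sub,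
            nonsing_inv_mul_cancel_left _ _ hM.det_pos.ne'.isUnit]
      _ = (1 + D)⁻¹ * (D ^ 2 + D ^ 3) * (1 + D)⁻¹ := by
          rw [show D ^ 2 + D ^ 3 = D ^ 2 * (1 + D) by noncomm_ring, ← Matrix.mul_assoc,
            mul_nonsing_inv_cancel_right _ _ hM.det_pos.ne'.isUnit]
  rw [h]
  have := ((hD.pow 2).add (hD.pow 3)).mul_mul_conjTranspose_same (1 + D)⁻¹
  rwa [hM.isHermitian.inv.eq] at this

end Matrix

theorem stmt3_general {N : ℕ} (D : Matrix (Fin N) (Fin N) ℝ) (hD : D.PosSemidef)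
    (c A : ℝ)
    (hDdiag : ∀ i, D i i ≤ c ^ 2 / N)
    (x : Fin N → ℝ) (hx : ∀ i, |x i| ≤ A) (i : Fin N) :
    |((1 + D)⁻¹ *ᵥ x) i| ≤ A * (1 + c ^ 2) := by
  have hN : (N : ℝ) ≠ 0 := by exact_mod_cast i.pos.ne'
  set E := (1 + D)⁻¹ * D
  have hEdiag (k : Fin N) : E k k ≤ c ^ 2 / N := by
    have := hD.sub_inv_one_add_mul.diag_nonneg (i := k)
    rw [Matrix.sub_apply] at this
    linarith [hDdiag k]
  have hEx : |(E *ᵥ x) i| ≤ A * c ^ 2 := by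
    have := abs_mulVec_apply_le (hD.inv_one_add_mul.abs_apply_le_of_diag_le hEdiag i) hx
    rwa [Fintype.card_fin, mul_div_cancel₀ _ hN, mul_comm] at this
  rw [inv_one_add_eq_one_sub_inv_one_add_mul (PosDef.one.add_posSemidef hD).det_pos.ne'.isUnit,
    sub_mulVec, one_mulVec, Pi.sub_apply]
  calc |x i - (E *ᵥ x) i| ≤ |x i| + |(E *ᵥ x) i| := abs_sub _ _
    _ ≤ A * (1 + c ^ 2) := by linarith [hx i]

/-- If `D` is symmetric PSD with `D i i ≤ c²/N` and `‖x‖_∞ ≤ A`, then every entry of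
`(I + D)⁻¹ x` is bounded by `A (1 + c²)`. -/
theorem stmt3 {N : ℕ} (D : Matrix (Fin N) (Fin N) ℝ) (hD : D.PosSemidef)
    (c A : ℝ) (hc : 0 ≤ c) (hA : 0 ≤ A)
    (hDdiag : ∀ i, D i i ≤ c ^ 2 / N)
    (x : Fin N → ℝ) (hx : ∀ i, |x i| ≤ A) (i : Fin N) :
    |((1 + D)⁻¹ *ᵥ x) i| ≤ A * (1 + c ^ 2) :=
  stmt3_general D hD c A hDdiag x hx i
end
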